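/- arXiv:1902.03903 — 4 statements merged into one kernel-verified Lean document; each statement's English description precedes it below -/
import Mathlib

section
/- Let N ≥ 3 and 1 ≤ k < N/2. The Hopf variables a_k, b_k, c_k, d_k on ℝ^{2N} satisfy the Poisson-bracket relations {b_k, c_k} = 2 d_k, {b_k, d_k} = −2 c_k, {c_k, d_k} = 2 b_k, and {a_k, b_k} = {a_k, c_k} = {a_k, d_k} = 0. -/
/-!
The Hopf variables involve only the two modes `i = k` and `j = N − k`, which are distinct
because `1 ≤ k < N/2`. Their differentials therefore vanish in every other direction, the
bracket collapses to the contributions of modes `i` and `j`, and each relation becomes a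
polynomial identity in `Q_i, P_i, Q_j, P_j`, valid for any pair of distinct modes.
-/

noncomputable section

open Finset

/-- The Poisson bracket on `ℝ^{2N}` with coordinates `(Q, P)`:
`{f,g} = Σ_k (∂f/∂Q_k ∂g/∂P_k − ∂f/∂P_k ∂g/∂Q_k)`. -/
def pb {N : ℕ} (f g : ((Fin N → ℝ) × (Fin N → ℝ)) → ℝ)
    (x : (Fin N → ℝ) × (Fin N → ℝ)) : ℝ :=
  ∑ k : Fin N,
    (fderiv ℝ f x (Pi.single k (1 : ℝ), 0) * fderiv ℝ g x (0, Pi.single k (1 : ℝ))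
      - fderiv ℝ f x (0, Pi.single k (1 : ℝ)) * fderiv ℝ g x (Pi.single k (1 : ℝ), 0))

/-- The coordinate with (1-based) label `j` is the component `(j−1) mod N` of `Fin N`. -/
def co (N : ℕ) (hN : 0 < N) (j : ℕ) : Fin N := ⟨(j - 1) % N, Nat.mod_lt _ hN⟩

/-- Hopf variable `a_k = ½(Q_k² + P_k² + Q_{N−k}² + P_{N−k}²)`. -/
def aH (N : ℕ) (hN : 0 < N) (k : ℕ) (x : (Fin N → ℝ) × (Fin N → ℝ)) : ℝ :=
  (x.1 (co N hN k) ^ 2 + x.2 (co N hN k) ^ 2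
    + x.1 (co N hN (N - k)) ^ 2 + x.2 (co N hN (N - k)) ^ 2) / 2

/-- Hopf variable `b_k = Q_k P_{N−k} − Q_{N−k} P_k`. -/
def bH (N : ℕ) (hN : 0 < N) (k : ℕ) (x : (Fin N → ℝ) × (Fin N → ℝ)) : ℝ :=
  x.1 (co N hN k) * x.2 (co N hN (N - k)) - x.1 (co N hN (N - k)) * x.2 (co N hN k)

/-- Hopf variable `c_k = ½(Q_k² + P_k² − Q_{N−k}² − P_{N−k}²)`. -/
def cH (N : ℕ) (hN : 0 < N) (k : ℕ) (x : (Fin N → ℝ) × (Fin N → ℝ)) : ℝ :=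
  (x.1 (co N hN k) ^ 2 + x.2 (co N hN k) ^ 2
    - x.1 (co N hN (N - k)) ^ 2 - x.2 (co N hN (N - k)) ^ 2) / 2

/-- Hopf variable `d_k = Q_k Q_{N−k} + P_k P_{N−k}`. -/
def dH (N : ℕ) (hN : 0 < N) (k : ℕ) (x : (Fin N → ℝ) × (Fin N → ℝ)) : ℝ :=
  x.1 (co N hN k) * x.1 (co N hN (N - k)) + x.2 (co N hN k) * x.2 (co N hN (N - k))

variable {N : ℕ}

theorem co_ne_co_sub (hN : 0 < N) {k : ℕ} (hk1 : 1 ≤ k) (hk2 : 2 * k < N) :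
    co N hN k ≠ co N hN (N - k) := by
  simp only [co, ne_eq, Fin.mk.injEq]
  rw [Nat.mod_eq_of_lt (by omega), Nat.mod_eq_of_lt (by omega)]
  omega

theorem pb_eq_of_fderiv_apply {f g : ((Fin N → ℝ) × (Fin N → ℝ)) → ℝ}
    {x : (Fin N → ℝ) × (Fin N → ℝ)} {i j : Fin N} (hij : i ≠ j) {a b c d a' b' c' d' : ℝ}
    (hf : ∀ v, fderiv ℝ f x v = a * v.1 i + b * v.2 i + c * v.1 j + d * v.2 j)
    (hg : ∀ v, fderiv ℝ g x v = a' * v.1 i + b' * v.2 i + c' * v.1 j + d' * v.2 j) :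
    pb f g x = a * b' - b * a' + (c * d' - d * c') := by
  unfold pb
  rw [sum_eq_add i j hij (fun m _ hm => by simp [hf, hg, Ne.symm hm.1, Ne.symm hm.2])
    (by simp) (by simp)]
  simp [hf, hg, hij, hij.symm]

section Hopf

/- `aH N hN k`, `bH N hN k`, `cH N hN k`, `dH N hN k` unfold to these with
`i = co N hN k` and `j = co N hN (N - k)`. -/

variable (i j : Fin N) (x : (Fin N → ℝ) × (Fin N → ℝ))

def hopfA : ℝ := (x.1 i ^ 2 + x.2 i ^ 2 + x.1 j ^ 2 + x.2 j ^ 2) / 2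

def hopfB : ℝ := x.1 i * x.2 j - x.1 j * x.2 i

def hopfC : ℝ := (x.1 i ^ 2 + x.2 i ^ 2 - x.1 j ^ 2 - x.2 j ^ 2) / 2

def hopfD : ℝ := x.1 i * x.1 j + x.2 i * x.2 j

theorem fderiv_hopfA_apply (v : (Fin N → ℝ) × (Fin N → ℝ)) :
    fderiv ℝ (hopfA i j) x v = x.1 i * v.1 i + x.2 i * v.2 i + x.1 j * v.1 j + x.2 j * v.2 j := by
  unfold hopfA
  simp (disch := fun_prop) only [pow_two, div_eq_mul_inv, fderiv_mul_const, fderiv_fun_add,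
    fderiv_fun_mul, fderiv_apply, fderiv_fst, fderiv_snd, add_apply, smul_apply,
    ContinuousLinearMap.comp_apply, ContinuousLinearMap.coe_fst', ContinuousLinearMap.coe_snd',
    ContinuousLinearMap.proj_apply, smul_eq_mul]
  ring

theorem fderiv_hopfB_apply (v : (Fin N → ℝ) × (Fin N → ℝ)) :
    fderiv ℝ (hopfB i j) x v
      = x.2 j * v.1 i + (-x.1 j) * v.2 i + (-x.2 i) * v.1 j + x.1 i * v.2 j := by
  unfold hopfB
  simp (disch := fun_prop) only [fderiv_fun_sub, fderiv_fun_mul, fderiv_apply, fderiv_fst,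
    fderiv_snd, add_apply, sub_apply, smul_apply, ContinuousLinearMap.comp_apply,
    ContinuousLinearMap.coe_fst', ContinuousLinearMap.coe_snd', ContinuousLinearMap.proj_apply,
    smul_eq_mul]
  ring

theorem fderiv_hopfC_apply (v : (Fin N → ℝ) × (Fin N → ℝ)) :
    fderiv ℝ (hopfC i j) x v
      = x.1 i * v.1 i + x.2 i * v.2 i + (-x.1 j) * v.1 j + (-x.2 j) * v.2 j := by
  unfold hopfC
  simp (disch := fun_prop) only [pow_two, div_eq_mul_inv, fderiv_mul_const, fderiv_fun_add,
    fderiv_fun_sub, fderiv_fun_mul, fderiv_apply, fderiv_fst, fderiv_snd, add_apply, sub_apply,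
    smul_apply, ContinuousLinearMap.comp_apply, ContinuousLinearMap.coe_fst',
    ContinuousLinearMap.coe_snd', ContinuousLinearMap.proj_apply, smul_eq_mul]
  ring

theorem fderiv_hopfD_apply (v : (Fin N → ℝ) × (Fin N → ℝ)) :
    fderiv ℝ (hopfD i j) x v = x.1 j * v.1 i + x.2 j * v.2 i + x.1 i * v.1 j + x.2 i * v.2 j := by
  unfold hopfD
  simp (disch := fun_prop) only [fderiv_fun_add, fderiv_fun_mul, fderiv_apply, fderiv_fst,
    fderiv_snd, add_apply, smul_apply, ContinuousLinearMap.comp_apply,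
    ContinuousLinearMap.coe_fst', ContinuousLinearMap.coe_snd', ContinuousLinearMap.proj_apply,
    smul_eq_mul]
  ring

variable {i j}

theorem pb_hopfB_hopfC (hij : i ≠ j) : pb (hopfB i j) (hopfC i j) x = 2 * hopfD i j x := by
  rw [pb_eq_of_fderiv_apply hij (fderiv_hopfB_apply i j x) (fderiv_hopfC_apply i j x), hopfD]
  ring

theorem pb_hopfB_hopfD (hij : i ≠ j) : pb (hopfB i j) (hopfD i j) x = -2 * hopfC i j x := by
  rw [pb_eq_of_fderiv_apply hij (fderiv_hopfB_apply i j x) (fderiv_hopfD_apply i j x), hopfC]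
  ring

theorem pb_hopfC_hopfD (hij : i ≠ j) : pb (hopfC i j) (hopfD i j) x = 2 * hopfB i j x := by
  rw [pb_eq_of_fderiv_apply hij (fderiv_hopfC_apply i j x) (fderiv_hopfD_apply i j x), hopfB]
  ring

theorem pb_hopfA_hopfB (hij : i ≠ j) : pb (hopfA i j) (hopfB i j) x = 0 := by
  rw [pb_eq_of_fderiv_apply hij (fderiv_hopfA_apply i j x) (fderiv_hopfB_apply i j x)]
  ring

theorem pb_hopfA_hopfC (hij : i ≠ j) : pb (hopfA i j) (hopfC i j) x = 0 := by
  rw [pb_eq_of_fderiv_apply hij (fderiv_hopfA_apply i j x) (fderiv_hopfC_apply i j x)]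
  ring

theorem pb_hopfA_hopfD (hij : i ≠ j) : pb (hopfA i j) (hopfD i j) x = 0 := by
  rw [pb_eq_of_fderiv_apply hij (fderiv_hopfA_apply i j x) (fderiv_hopfD_apply i j x)]
  ring

end Hopf

theorem hopf_poisson_relations_general (N : ℕ) (hN0 : 0 < N)
    (k : ℕ) (hk1 : 1 ≤ k) (hk2 : 2 * k < N) :
    (∀ x, pb (bH N hN0 k) (cH N hN0 k) x = 2 * dH N hN0 k x) ∧
    (∀ x, pb (bH N hN0 k) (dH N hN0 k) x = -2 * cH N hN0 k x) ∧
    (∀ x, pb (cH N hN0 k) (dH N hN0 k) x = 2 * bH N hN0 k x) ∧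
    (∀ x, pb (aH N hN0 k) (bH N hN0 k) x = 0) ∧
    (∀ x, pb (aH N hN0 k) (cH N hN0 k) x = 0) ∧
    (∀ x, pb (aH N hN0 k) (dH N hN0 k) x = 0) := by
  have hij := co_ne_co_sub hN0 hk1 hk2
  exact ⟨fun x => pb_hopfB_hopfC x hij, fun x => pb_hopfB_hopfD x hij,
    fun x => pb_hopfC_hopfD x hij, fun x => pb_hopfA_hopfB x hij,
    fun x => pb_hopfA_hopfC x hij, fun x => pb_hopfA_hopfD x hij⟩

/-- For `N ≥ 3` and `1 ≤ k < N/2`, the Hopf variables satisfy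
`{b_k, c_k} = 2 d_k`, `{b_k, d_k} = −2 c_k`, `{c_k, d_k} = 2 b_k`, and
`{a_k, b_k} = {a_k, c_k} = {a_k, d_k} = 0`. -/
theorem hopf_poisson_relations (N : ℕ) (hN : 3 ≤ N) (hN0 : 0 < N)
    (k : ℕ) (hk1 : 1 ≤ k) (hk2 : 2 * k < N) :
    (∀ x, pb (bH N hN0 k) (cH N hN0 k) x = 2 * dH N hN0 k x) ∧
    (∀ x, pb (bH N hN0 k) (dH N hN0 k) x = -2 * cH N hN0 k x) ∧
    (∀ x, pb (cH N hN0 k) (dH N hN0 k) x = 2 * bH N hN0 k x) ∧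
    (∀ x, pb (aH N hN0 k) (bH N hN0 k) x = 0) ∧
    (∀ x, pb (aH N hN0 k) (cH N hN0 k) x = 0) ∧
    (∀ x, pb (aH N hN0 k) (dH N hN0 k) x = 0) :=
  hopf_poisson_relations_general N hN0 k hk1 hk2

end
end

section
/- Let N ≥ 3 be odd, β ∈ ℝ, and set ω_k = √(1 + 4 sin²(kπ/N)) for k = 1, …, N. Let H₂ = Σ_{k=1}^N (ω_k/2)(Q_k² + P_k²) and let H̄₄ = (β/(2N)) [ (3/4) Σ_{k=1}^{(N−1)/2} (3a_k² − b_k²)/ω_k² + (3/2) a_N²/ω_N² + 6 (a_N/ω_N) Σ_{k=1}^{(N−1)/2} a_k/ω_k + 6 Σ_{1≤k<l≤(N−1)/2} a_k a_l/(ω_k ω_l) ]. Then {H₂, H̄₄} = 0, i.e. the truncated normal form H̄ = H₂ + H̄₄ Poisson-commutes with its quadratic part. -/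
noncomputable section

open Finset

/-- `a_N = ½(Q_N² + P_N²)`. -/
def aNf (N : ℕ) (hN : 0 < N) (x : (Fin N → ℝ) × (Fin N → ℝ)) : ℝ :=
  (x.1 (co N hN N) ^ 2 + x.2 (co N hN N) ^ 2) / 2

/-- The normal-mode frequencies `ω_k = √(1 + 4 sin²(kπ/N))` (note `ω_N = 1`). -/
def omg (N k : ℕ) : ℝ := Real.sqrt (1 + 4 * Real.sin (k * Real.pi / N) ^ 2)

/-- The quadratic part `H₂ = Σ_{k=1}^N (ω_k/2)(Q_k² + P_k²)`. -/
def H2KG (N : ℕ) (hN : 0 < N) (x : (Fin N → ℝ) × (Fin N → ℝ)) : ℝ :=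
  ∑ k ∈ Finset.Icc 1 N, omg N k / 2 * (x.1 (co N hN k) ^ 2 + x.2 (co N hN k) ^ 2)

/-- The fourth order part `H̄₄` of the normal form of the periodic KG lattice, `N` odd:
`H̄₄ = (β/(2N)) [ (3/4) Σ_{k=1}^{(N−1)/2} (3a_k² − b_k²)/ω_k² + (3/2) a_N²/ω_N²
+ 6 (a_N/ω_N) Σ_{k=1}^{(N−1)/2} a_k/ω_k + 6 Σ_{1≤k<l≤(N−1)/2} a_k a_l/(ω_k ω_l) ]`. -/
def H4odd (N : ℕ) (hN : 0 < N) (β : ℝ) (x : (Fin N → ℝ) × (Fin N → ℝ)) : ℝ :=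
  β / (2 * N) *
    ((3 / 4) * ∑ k ∈ Finset.Icc 1 ((N - 1) / 2),
        (3 * aH N hN k x ^ 2 - bH N hN k x ^ 2) / omg N k ^ 2
      + (3 / 2) * aNf N hN x ^ 2 / omg N N ^ 2
      + 6 * (aNf N hN x / omg N N) * ∑ k ∈ Finset.Icc 1 ((N - 1) / 2), aH N hN k x / omg N k
      + 6 * ∑ k ∈ Finset.Icc 1 ((N - 1) / 2), ∑ l ∈ Finset.Icc (k + 1) ((N - 1) / 2),
          aH N hN k x * aH N hN l x / (omg N k * omg N l))

/-!
`{H₂, G}` is minus the derivative of `G` along the Hamiltonian vector field of `H₂`, which rotates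
each plane `(Q_j, P_j)` with angular speed `ω_j`. The actions `Q_j² + P_j²` are invariant under this
flow, and so is `Q_k P_{N−k} − Q_{N−k} P_k`, because `ω_{N−k} = ω_k`. First integrals of a vector
field form an algebra, and `H̄₄` is a polynomial in `a_k`, `b_k` and `a_N`.
-/

section FirstIntegral

variable {𝕜 E : Type*} [NontriviallyNormedField 𝕜] [NormedAddCommGroup E] [NormedSpace 𝕜 E]

def IsFirstIntegral (V : E → E) (f : E → 𝕜) : Prop :=
  ∀ x, DifferentiableAt 𝕜 f x ∧ fderiv 𝕜 f x (V x) = 0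

namespace IsFirstIntegral

variable {V : E → E} {f g : E → 𝕜}

lemma add (hf : IsFirstIntegral V f) (hg : IsFirstIntegral V g) :
    IsFirstIntegral V (fun y => f y + g y) := fun x =>
  ⟨(hf x).1.add (hg x).1, by simp [fderiv_fun_add (hf x).1 (hg x).1, (hf x).2, (hg x).2]⟩

lemma sub (hf : IsFirstIntegral V f) (hg : IsFirstIntegral V g) :
    IsFirstIntegral V (fun y => f y - g y) := fun x =>
  ⟨(hf x).1.sub (hg x).1, by simp [fderiv_fun_sub (hf x).1 (hg x).1, (hf x).2, (hg x).2]⟩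

lemma mul (hf : IsFirstIntegral V f) (hg : IsFirstIntegral V g) :
    IsFirstIntegral V (fun y => f y * g y) := fun x =>
  ⟨(hf x).1.mul (hg x).1, by simp [fderiv_fun_mul (hf x).1 (hg x).1, (hf x).2, (hg x).2]⟩

lemma const_mul (hf : IsFirstIntegral V f) (c : 𝕜) :
    IsFirstIntegral V (fun y => c * f y) := fun x =>
  ⟨(hf x).1.const_mul c, by simp [fderiv_const_mul (hf x).1, (hf x).2]⟩

lemma div_const (hf : IsFirstIntegral V f) (c : 𝕜) :
    IsFirstIntegral V (fun y => f y / c) := by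
  simpa only [div_eq_inv_mul] using hf.const_mul c⁻¹

lemma pow (hf : IsFirstIntegral V f) (n : ℕ) :
    IsFirstIntegral V (fun y => f y ^ n) := fun x =>
  ⟨(hf x).1.pow n, by simp [fderiv_fun_pow n (hf x).1, (hf x).2]⟩

lemma sum {ι : Type*} {s : Finset ι} {F : ι → E → 𝕜} (h : ∀ i ∈ s, IsFirstIntegral V (F i)) :
    IsFirstIntegral V (fun y => ∑ i ∈ s, F i y) := fun x =>
  ⟨DifferentiableAt.fun_sum fun i hi => (h i hi x).1, by
    rw [fderiv_fun_sum fun i hi => (h i hi x).1, _root_.sum_apply]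
    exact Finset.sum_eq_zero fun i hi => (h i hi x).2⟩

end IsFirstIntegral

end FirstIntegral

abbrev PhaseSpace (N : ℕ) := (Fin N → ℝ) × (Fin N → ℝ)

namespace PhaseSpace

variable {N : ℕ}

@[simp]
lemma fderiv_fst_coord (i : Fin N) (x v : PhaseSpace N) :
    fderiv ℝ (fun y : PhaseSpace N => y.1 i) x v = v.1 i := by
  rw [show (fun y : PhaseSpace N => y.1 i)
      = (ContinuousLinearMap.proj i).comp (ContinuousLinearMap.fst ℝ _ _) from rfl,
    ContinuousLinearMap.fderiv]
  rfl

@[simp]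
lemma fderiv_snd_coord (i : Fin N) (x v : PhaseSpace N) :
    fderiv ℝ (fun y : PhaseSpace N => y.2 i) x v = v.2 i := by
  rw [show (fun y : PhaseSpace N => y.2 i)
      = (ContinuousLinearMap.proj i).comp (ContinuousLinearMap.snd ℝ _ _) from rfl,
    ContinuousLinearMap.fderiv]
  rfl

lemma apply_eq_sum_single (φ : PhaseSpace N →L[ℝ] ℝ) (u w : Fin N → ℝ) :
    φ (u, w) = ∑ k, (u k * φ (Pi.single k 1, 0) + w k * φ (0, Pi.single k 1)) := by
  have hdecomp : ((u, w) : PhaseSpace N) =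
      ∑ k, (u k • ((Pi.single k 1, 0) : PhaseSpace N)
        + w k • ((0, Pi.single k 1) : PhaseSpace N)) := by
    ext i <;> simp [Prod.fst_sum, Prod.snd_sum, Finset.sum_apply, Pi.single_apply]
  simp only [hdecomp, map_sum, map_add, map_smul, smul_eq_mul]

def hamiltonianVectorField (H : PhaseSpace N → ℝ) (x : PhaseSpace N) : PhaseSpace N :=
  (fun k => fderiv ℝ H x (0, Pi.single k 1), fun k => -fderiv ℝ H x (Pi.single k 1, 0))

lemma pb_eq_neg_fderiv_hamiltonianVectorField (H G : PhaseSpace N → ℝ) (x : PhaseSpace N) :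
    pb H G x = -fderiv ℝ G x (hamiltonianVectorField H x) := by
  rw [hamiltonianVectorField, apply_eq_sum_single, pb, ← Finset.sum_neg_distrib]
  refine Finset.sum_congr rfl fun k _ => ?_
  ring

def harmonic (ω : Fin N → ℝ) (y : PhaseSpace N) : ℝ :=
  ∑ j, ω j / 2 * (y.1 j ^ 2 + y.2 j ^ 2)

lemma fderiv_harmonic (ω : Fin N → ℝ) (x v : PhaseSpace N) :
    fderiv ℝ (harmonic ω) x v = ∑ j, ω j * (x.1 j * v.1 j + x.2 j * v.2 j) := by
  unfold harmonic
  simp (disch := fun_prop) [fderiv_fun_sum, fderiv_fun_add, fderiv_fun_pow, fderiv_const_mul]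
  exact Finset.sum_congr rfl fun j _ => by ring

lemma hamiltonianVectorField_harmonic (ω : Fin N → ℝ) (x : PhaseSpace N) :
    hamiltonianVectorField (harmonic ω) x = (fun j => ω j * x.2 j, fun j => -(ω j * x.1 j)) := by
  ext j <;> simp [hamiltonianVectorField, fderiv_harmonic, Pi.single_apply]

lemma isFirstIntegral_harmonic_mode (ω : Fin N → ℝ) (i : Fin N) :
    IsFirstIntegral (hamiltonianVectorField (harmonic ω)) (fun y => y.1 i ^ 2 + y.2 i ^ 2) := by
  intro x
  refine ⟨by fun_prop, ?_⟩
  simp (disch := fun_prop) [hamiltonianVectorField_harmonic, fderiv_fun_add, fderiv_fun_pow]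
  ring

lemma isFirstIntegral_harmonic_angularMomentum {ω : Fin N → ℝ} {i j : Fin N} (hij : ω i = ω j) :
    IsFirstIntegral (hamiltonianVectorField (harmonic ω))
      (fun y => y.1 i * y.2 j - y.1 j * y.2 i) := by
  intro x
  refine ⟨by fun_prop, ?_⟩
  simp (disch := fun_prop) [hamiltonianVectorField_harmonic, fderiv_fun_sub, fderiv_fun_mul, hij]
  ring

end PhaseSpace

section KleinGordon

open PhaseSpace

variable {N : ℕ}

lemma co_val (hN : 0 < N) {k : ℕ} (h1 : 1 ≤ k) (h2 : k ≤ N) : (co N hN k : ℕ) = k - 1 :=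
  Nat.mod_eq_of_lt (by omega)

lemma omg_sub_self {k : ℕ} (hk : k ≤ N) : omg N (N - k) = omg N k := by
  rcases Nat.eq_zero_or_pos N with rfl | hN
  · rw [Nat.le_zero.mp hk]
  unfold omg
  rw [Nat.cast_sub hk, sub_mul, sub_div, mul_div_cancel_left₀ _ (by positivity : (N : ℝ) ≠ 0),
    Real.sin_pi_sub]

-- The mode with index `j : Fin N` carries the label `j + 1`, as in `co`.
def modeFreq (N : ℕ) (j : Fin N) : ℝ := omg N (j + 1)

lemma modeFreq_co (hN : 0 < N) {k : ℕ} (h1 : 1 ≤ k) (h2 : k ≤ N) :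
    modeFreq N (co N hN k) = omg N k := by
  rw [modeFreq, co_val hN h1 h2, Nat.sub_add_cancel h1]

lemma H2KG_eq_harmonic (hN : 0 < N) : H2KG N hN = harmonic (modeFreq N) := by
  funext y
  refine Finset.sum_bij' (fun k _ => co N hN k) (fun j _ => (j : ℕ) + 1) ?_ ?_ ?_ ?_ ?_
  · exact fun _ _ => mem_univ _
  · exact fun j _ => mem_Icc.mpr ⟨by omega, j.2⟩
  · intro k hk
    obtain ⟨h1, h2⟩ := mem_Icc.mp hk
    rw [co_val hN h1 h2]
    omega
  · exact fun j _ => Fin.ext (co_val hN (by omega) j.2)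
  · intro k hk
    rw [modeFreq_co hN (mem_Icc.mp hk).1 (mem_Icc.mp hk).2]

lemma isFirstIntegral_aH (hN : 0 < N) (k : ℕ) :
    IsFirstIntegral (hamiltonianVectorField (H2KG N hN)) (aH N hN k) := by
  rw [H2KG_eq_harmonic]
  convert ((isFirstIntegral_harmonic_mode _ (co N hN k)).add
    (isFirstIntegral_harmonic_mode _ (co N hN (N - k)))).div_const 2 using 1
  funext y
  rw [aH, add_assoc _ (y.1 _ ^ 2)]

lemma isFirstIntegral_aNf (hN : 0 < N) :
    IsFirstIntegral (hamiltonianVectorField (H2KG N hN)) (aNf N hN) := by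
  rw [H2KG_eq_harmonic]
  exact (isFirstIntegral_harmonic_mode _ _).div_const 2

lemma isFirstIntegral_bH (hN : 0 < N) {k : ℕ} (h1 : 1 ≤ k) (h2 : k < N) :
    IsFirstIntegral (hamiltonianVectorField (H2KG N hN)) (bH N hN k) := by
  rw [H2KG_eq_harmonic]
  refine isFirstIntegral_harmonic_angularMomentum ?_
  rw [modeFreq_co hN h1 h2.le, modeFreq_co hN (by omega) (by omega), omg_sub_self h2.le]

lemma isFirstIntegral_H4odd (hN : 0 < N) (β : ℝ) :
    IsFirstIntegral (hamiltonianVectorField (H2KG N hN)) (H4odd N hN β) := by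
  have haH := isFirstIntegral_aH hN
  have haN := isFirstIntegral_aNf hN
  refine .const_mul (.add (.add (.add (.const_mul (.sum fun k hk => ?_) _) ?_) ?_) ?_) _
  · obtain ⟨hk1, hk2⟩ := mem_Icc.mp hk
    have hbH := isFirstIntegral_bH hN hk1 (by omega)
    exact ((((haH k).pow 2).const_mul 3).sub (hbH.pow 2)).div_const _
  · exact ((haN.pow 2).const_mul _).div_const _
  · exact ((haN.div_const _).const_mul 6).mul (.sum fun k _ => (haH k).div_const _)
  · exact .const_mul (.sum fun k _ => .sum fun l _ => ((haH k).mul (haH l)).div_const _) _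

end KleinGordon

theorem H2_commutes_with_H4_odd_general (N : ℕ) (hN0 : 0 < N)
    (β : ℝ) :
    ∀ x, pb (H2KG N hN0) (H4odd N hN0 β) x = 0 := fun x => by
  rw [PhaseSpace.pb_eq_neg_fderiv_hamiltonianVectorField, (isFirstIntegral_H4odd hN0 β x).2,
    neg_zero]

/-- For `N ≥ 3` odd, the truncated normal form `H̄ = H₂ + H̄₄` of the
periodic KG lattice Poisson-commutes with its quadratic part: `{H₂, H̄₄} = 0`. -/
theorem H2_commutes_with_H4_odd (N : ℕ) (hN : 3 ≤ N) (hodd : Odd N) (hN0 : 0 < N)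
    (β : ℝ) :
    ∀ x, pb (H2KG N hN0) (H4odd N hN0 β) x = 0 :=
  H2_commutes_with_H4_odd_general N hN0 β

end
end

section
/- Let n ≥ 1, N = 2n+2, β ∈ ℝ, and ω_k = √(1 + 4 sin²(kπ/N)) for 1 ≤ k ≤ N. In the fourth-order normal form H̄₄ of the periodic KG lattice with N particles, H̄₄ = (β/(2N)) [ (3/2)(a_{N/2}²/ω_{N/2}² + a_N²/ω_N²) + 6 a_{N/2} a_N/(ω_{N/2} ω_N) + 6 (a_{N/2}/ω_{N/2} + a_N/ω_N) Σ_{1≤k<N/2} a_k/ω_k + (3/4) Σ_{1≤k<N/2} (3a_k² − b_k²)/ω_k² + 6 Σ_{1≤k<l<N/2} a_k a_l/(ω_k ω_l) + 3 Σ_{1≤k<N/4} (c_k c_{N/2−k} − d_k d_{N/2−k})/(ω_k ω_{N/2−k}) + (3/4)(c_{N/4}² − d_{N/4}²)/ω_{N/4}² ] (the N/4 terms present only when 4 | N), substitute a_k = I_k, b_k = 0, c_k = −I_k, d_k = 0 for 1 ≤ k ≤ n, and a_{N/2} = a_N = 0. The result equals, as a polynomial identity in the variables I_1, …, I_n, the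 expression (β/(2(2n+2))) [ (9/4) Σ_{k=1}^n I_k²/ω_k² + 6 Σ_{1≤k<l≤n} I_k I_l/(ω_k ω_l) + 3 Σ_{1≤k<(n+1)/2} I_k I_{n+1−k}/(ω_k ω_{n+1−k}) + (3/4) I_{(n+1)/2}²/ω_{(n+1)/2}² ], where the last term is present only when n is odd. -/
noncomputable section

open Finset

/-! On `Fix⟨S⟩` the index range `1 ≤ k < N/2` of the periodic lattice with `N = 2n + 2`
becomes `1 ≤ k ≤ n`, the resonant pairs `(k, N/2 - k)` become the pairs `(k, n + 1 - k)`,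
and the self-resonant mode `N/4` (present iff `4 ∣ N`) becomes the middle mode `(n + 1)/2`
(present iff `n` is odd). Since `a_{N/2} = a_N = b_k = d_k = 0` and `c_k c_{N/2-k} = I_k I_{n+1-k}`,
what remains is a term-by-term identification. -/

lemma filter_four_mul_lt_eq_filter_two_mul_lt (n : ℕ) (s : Finset ℕ) :
    s.filter (fun k => 4 * k < 2 * n + 2) = s.filter (fun k => 2 * k < n + 1) :=
  filter_congr fun _ _ => by omega

lemma ite_four_dvd_eq_ite_odd {M : Type*} [Zero M] (n : ℕ) (f : ℕ → M) :
    (if (2 * n + 2) % 4 = 0 then f ((2 * n + 2) / 4) else 0)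
      = if n % 2 = 1 then f ((n + 1) / 2) else 0 := by
  by_cases hn : n % 2 = 1
  · rw [if_pos (by omega), if_pos hn, show (2 * n + 2) / 4 = (n + 1) / 2 by omega]
  · rw [if_neg (by omega), if_neg hn]

theorem restriction_of_normal_form_to_fixed_endpoints_general (n : ℕ) (β : ℝ)
    (I : ℕ → ℝ) :
    (β / (2 * (2 * n + 2 : ℕ)) *
      ((3 / 2) * ((0 : ℝ) ^ 2 / omg (2 * n + 2) ((2 * n + 2) / 2) ^ 2
          + (0 : ℝ) ^ 2 / omg (2 * n + 2) (2 * n + 2) ^ 2)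
        + 6 * (0 : ℝ) * (0 : ℝ) / (omg (2 * n + 2) ((2 * n + 2) / 2) * omg (2 * n + 2) (2 * n + 2))
        + 6 * ((0 : ℝ) / omg (2 * n + 2) ((2 * n + 2) / 2) + (0 : ℝ) / omg (2 * n + 2) (2 * n + 2)) *
            ∑ k ∈ Finset.Ico 1 ((2 * n + 2) / 2), I k / omg (2 * n + 2) k
        + (3 / 4) * ∑ k ∈ Finset.Ico 1 ((2 * n + 2) / 2),
            (3 * I k ^ 2 - (0 : ℝ) ^ 2) / omg (2 * n + 2) k ^ 2
        + 6 * ∑ k ∈ Finset.Ico 1 ((2 * n + 2) / 2), ∑ l ∈ Finset.Ico (k + 1) ((2 * n + 2) / 2),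
            I k * I l / (omg (2 * n + 2) k * omg (2 * n + 2) l)
        + 3 * ∑ k ∈ (Finset.Ico 1 ((2 * n + 2) / 2)).filter (fun k => 4 * k < 2 * n + 2),
            ((- I k) * (- I ((2 * n + 2) / 2 - k)) - (0 : ℝ) * (0 : ℝ))
              / (omg (2 * n + 2) k * omg (2 * n + 2) ((2 * n + 2) / 2 - k))
        + (if (2 * n + 2) % 4 = 0 then
            (3 / 4) * ((- I ((2 * n + 2) / 4)) ^ 2 - (0 : ℝ) ^ 2)
              / omg (2 * n + 2) ((2 * n + 2) / 4) ^ 2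
          else 0))) =
    β / (2 * (2 * n + 2 : ℕ)) *
      ((9 / 4) * ∑ k ∈ Finset.Icc 1 n, I k ^ 2 / omg (2 * n + 2) k ^ 2
        + 6 * ∑ k ∈ Finset.Icc 1 n, ∑ l ∈ Finset.Icc (k + 1) n,
            I k * I l / (omg (2 * n + 2) k * omg (2 * n + 2) l)
        + 3 * ∑ k ∈ (Finset.Icc 1 n).filter (fun k => 2 * k < n + 1),
            I k * I (n + 1 - k) / (omg (2 * n + 2) k * omg (2 * n + 2) (n + 1 - k))
        + (if n % 2 = 1 then
            (3 / 4) * I ((n + 1) / 2) ^ 2 / omg (2 * n + 2) ((n + 1) / 2) ^ 2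
          else 0)) := by
  rw [show (2 * n + 2) / 2 = n + 1 by omega, filter_four_mul_lt_eq_filter_two_mul_lt,
    ite_four_dvd_eq_ite_odd n (fun m => (3 / 4) * ((- I m) ^ 2 - (0 : ℝ) ^ 2) / omg (2 * n + 2) m ^ 2)]
  simp only [Ico_add_one_right_eq_Icc, neg_mul_neg, neg_sq, mul_zero, zero_pow two_ne_zero,
    sub_zero, zero_div, add_zero, zero_mul, zero_add, mul_div_assoc, ← mul_sum]
  ring

/-- Let `n ≥ 1`, `N = 2n+2`.  Substituting `a_k = I_k`, `b_k = 0`,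
`c_k = −I_k`, `d_k = 0` (`1 ≤ k ≤ n`) and `a_{N/2} = a_N = 0` into the fourth-order
normal form `H̄₄` of the periodic KG lattice with `N` particles yields, as a polynomial
identity in `I_1, …, I_n`, the fourth-order normal form of the KG lattice with `n`
particles and fixed endpoints. -/
theorem restriction_of_normal_form_to_fixed_endpoints (n : ℕ) (hn : 1 ≤ n) (β : ℝ)
    (I : ℕ → ℝ) :
    (β / (2 * (2 * n + 2 : ℕ)) *
      ((3 / 2) * ((0 : ℝ) ^ 2 / omg (2 * n + 2) ((2 * n + 2) / 2) ^ 2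
          + (0 : ℝ) ^ 2 / omg (2 * n + 2) (2 * n + 2) ^ 2)
        + 6 * (0 : ℝ) * (0 : ℝ) / (omg (2 * n + 2) ((2 * n + 2) / 2) * omg (2 * n + 2) (2 * n + 2))
        + 6 * ((0 : ℝ) / omg (2 * n + 2) ((2 * n + 2) / 2) + (0 : ℝ) / omg (2 * n + 2) (2 * n + 2)) *
            ∑ k ∈ Finset.Ico 1 ((2 * n + 2) / 2), I k / omg (2 * n + 2) k
        + (3 / 4) * ∑ k ∈ Finset.Ico 1 ((2 * n + 2) / 2),
            (3 * I k ^ 2 - (0 : ℝ) ^ 2) / omg (2 * n + 2) k ^ 2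
        + 6 * ∑ k ∈ Finset.Ico 1 ((2 * n + 2) / 2), ∑ l ∈ Finset.Ico (k + 1) ((2 * n + 2) / 2),
            I k * I l / (omg (2 * n + 2) k * omg (2 * n + 2) l)
        + 3 * ∑ k ∈ (Finset.Ico 1 ((2 * n + 2) / 2)).filter (fun k => 4 * k < 2 * n + 2),
            ((- I k) * (- I ((2 * n + 2) / 2 - k)) - (0 : ℝ) * (0 : ℝ))
              / (omg (2 * n + 2) k * omg (2 * n + 2) ((2 * n + 2) / 2 - k))
        + (if (2 * n + 2) % 4 = 0 then
            (3 / 4) * ((- I ((2 * n + 2) / 4)) ^ 2 - (0 : ℝ) ^ 2)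
              / omg (2 * n + 2) ((2 * n + 2) / 4) ^ 2
          else 0))) =
    β / (2 * (2 * n + 2 : ℕ)) *
      ((9 / 4) * ∑ k ∈ Finset.Icc 1 n, I k ^ 2 / omg (2 * n + 2) k ^ 2
        + 6 * ∑ k ∈ Finset.Icc 1 n, ∑ l ∈ Finset.Icc (k + 1) n,
            I k * I l / (omg (2 * n + 2) k * omg (2 * n + 2) l)
        + 3 * ∑ k ∈ (Finset.Icc 1 n).filter (fun k => 2 * k < n + 1),
            I k * I (n + 1 - k) / (omg (2 * n + 2) k * omg (2 * n + 2) (n + 1 - k))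
        + (if n % 2 = 1 then
            (3 / 4) * I ((n + 1) / 2) ^ 2 / omg (2 * n + 2) ((n + 1) / 2) ^ 2
          else 0)) :=
  restriction_of_normal_form_to_fixed_endpoints_general n β I

end
end

section
/- For every integer n ≥ 1 the n×n matrix F_n defined by: F_{kk} = 3 if 2k ≠ n+1, F_{kk} = 4 if 2k = n+1, F_{k,l} = 6 if k ≠ l and k + l = n+1, and F_{k,l} = 4 otherwise, has nonzero determinant (F_n is nonsingular). -/
/-!
Write `s = ∑ j, v j`. Row `i` of `F *ᵥ v = 0` says `c i * v i = 4 s + 2 v (rev i)`, where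
`rev` is the mirror `k ↦ n + 1 - k` and `c i` is `2` at the middle index (`i = rev i`, only for
odd `n`) and `1` elsewhere. Pairing row `i` with row `rev i` off the middle gives
`v i = -4 s`. If there is a middle index `m`, its row reads `2 v m = 4 s + 2 v m`, so `s = 0`;
otherwise summing gives `s = -4 n s`, so again `s = 0`. Hence every entry of `v` vanishes.
-/

open Finset Matrix

def Fn (n : ℕ) : Matrix (Fin n) (Fin n) ℝ :=
  Matrix.of fun i j =>
    if i = j then (if 2 * ((i : ℕ) + 1) = n + 1 then 4 else 3)
    else (if (i : ℕ) + 1 + ((j : ℕ) + 1) = n + 1 then 6 else 4)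

theorem Fin.eq_of_eq_rev_of_eq_rev {n : ℕ} {i j : Fin n} (hi : i = i.rev) (hj : j = j.rev) :
    i = j := by
  rw [Fin.ext_iff, Fin.val_rev] at hi hj
  exact Fin.ext (by omega)

namespace Fn

variable {n : ℕ}

-- With 0-based indices the anti-diagonal condition `k + l = n + 1` becomes `j = i.rev`.
theorem apply_eq (i j : Fin n) :
    Fn n i j = 4 + (if j = i.rev then 2 else 0)
      - (if j = i then (if i = i.rev then 2 else 1) else 0) := by
  simp only [Fn, of_apply, Fin.ext_iff, Fin.val_rev]
  have := i.isLt
  have := j.isLt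
  split_ifs <;> first | omega | norm_num

theorem mulVec_apply (v : Fin n → ℝ) (i : Fin n) :
    (Fn n *ᵥ v) i = 4 * ∑ j, v j + 2 * v i.rev - (if i = i.rev then 2 else 1) * v i := by
  simp only [mulVec, dotProduct, apply_eq, add_mul, sub_mul, ite_mul, zero_mul,
    sum_add_distrib, sum_sub_distrib, sum_ite_eq', mem_univ, if_true, ← mul_sum]

section Kernel

variable {v : Fin n → ℝ}

theorem row_eq_of_mulVec_eq_zero (hv : Fn n *ᵥ v = 0) (i : Fin n) :
    (if i = i.rev then 2 else 1) * v i = 4 * ∑ j, v j + 2 * v i.rev := by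
  have := congrFun hv i
  rw [mulVec_apply, Pi.zero_apply] at this
  linarith

theorem apply_eq_of_mulVec_eq_zero_of_ne_rev (hv : Fn n *ᵥ v = 0) {i : Fin n}
    (hi : i ≠ i.rev) : v i = -4 * ∑ j, v j := by
  have hrow := row_eq_of_mulVec_eq_zero hv i
  have hrow_rev := row_eq_of_mulVec_eq_zero hv i.rev
  rw [if_neg hi] at hrow
  rw [Fin.rev_rev, if_neg (Ne.symm hi)] at hrow_rev
  linarith

theorem sum_eq_zero_of_mulVec_eq_zero (hv : Fn n *ᵥ v = 0) : ∑ j, v j = 0 := by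
  by_cases hmid : ∃ m : Fin n, m = m.rev
  · obtain ⟨m, hm⟩ := hmid
    have hrow := row_eq_of_mulVec_eq_zero hv m
    rw [if_pos hm, ← hm] at hrow
    linarith
  · push Not at hmid
    have hsum : ∑ j, v j = ∑ _j : Fin n, -4 * ∑ j, v j :=
      sum_congr rfl fun j _ => apply_eq_of_mulVec_eq_zero_of_ne_rev hv (hmid j)
    rw [sum_const, card_univ, Fintype.card_fin, nsmul_eq_mul] at hsum
    nlinarith [(n.cast_nonneg : (0 : ℝ) ≤ n)]

theorem eq_zero_of_mulVec_eq_zero (hv : Fn n *ᵥ v = 0) : v = 0 := by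
  have hs := sum_eq_zero_of_mulVec_eq_zero hv
  have off_mid : ∀ {i : Fin n}, i ≠ i.rev → v i = 0 := fun hi => by
    rw [apply_eq_of_mulVec_eq_zero_of_ne_rev hv hi, hs, mul_zero]
  funext i
  by_cases hi : i = i.rev
  · calc v i = ∑ j, v j :=
          (Fintype.sum_eq_single i fun j hj =>
            off_mid fun hj' => hj (Fin.eq_of_eq_rev_of_eq_rev hj' hi)).symm
      _ = 0 := hs
  · exact off_mid hi

end Kernel

theorem det_ne_zero (n : ℕ) : (Fn n).det ≠ 0 := by
  rw [Ne, ← exists_mulVec_eq_zero_iff]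
  rintro ⟨v, hv, hFv⟩
  exact hv (eq_zero_of_mulVec_eq_zero hFv)

end Fn

theorem Fn_nonsingular_general (n : ℕ) (F : Matrix (Fin n) (Fin n) ℝ)
    (hF : ∀ i j : Fin n, F i j =
      if i = j then
        (if 2 * ((i : ℕ) + 1) = n + 1 then 4 else 3)
      else
        (if (i : ℕ) + 1 + ((j : ℕ) + 1) = n + 1 then 6 else 4)) :
    F.det ≠ 0 := by
  obtain rfl : F = Fn n := Matrix.ext hF
  exact Fn.det_ne_zero n

/-- For every `n ≥ 1` the `n×n` matrix `F_n` with diagonal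
entries `3` (but `4` at position `(k,k)` when `2k = n+1`), entries `6` at
off-diagonal positions `(k,l)` with `k + l = n+1`, and `4` elsewhere,
is nonsingular.  (Indices are 1-based: position `(k,l)` with `1 ≤ k, l ≤ n`.) -/
theorem Fn_nonsingular (n : ℕ) (hn : 1 ≤ n) (F : Matrix (Fin n) (Fin n) ℝ)
    (hF : ∀ i j : Fin n, F i j =
      if i = j then
        (if 2 * ((i : ℕ) + 1) = n + 1 then 4 else 3)
      else
        (if (i : ℕ) + 1 + ((j : ℕ) + 1) = n + 1 then 6 else 4)) :
    F.det ≠ 0 :=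
  Fn_nonsingular_general n F hF
end
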